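/- arXiv:1807.09704 — 8 statements merged into one kernel-verified Lean document; each statement's English description precedes it below -/
import Mathlib

section
/- Let L₁ and L₂ be Lagrangian subspaces of V ⊕ V* that are transverse, i.e. pr_V(L₁) + pr_V(L₂) = V. Then their Dirac sum L₁ + L₂ = {(X, α + β) : (X, α) ∈ L₁, (X, β) ∈ L₂} is again a Lagrangian subspace of V ⊕ V*. -/
open Module

section Defs

variable {K V : Type*} [Field K] [AddCommGroup V] [Module K V]

/-- The canonical split-signature symmetric pairing on `V ⊕ V*`. -/
def pairing (u v : V × Module.Dual K V) : K := u.2 v.1 + v.2 u.1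

/-- A subspace of `V ⊕ V*` is Lagrangian if the canonical pairing vanishes identically
on it and its dimension equals that of `V`. -/
def IsLagrangian (L : Submodule K (V × Module.Dual K V)) : Prop :=
  (∀ u ∈ L, ∀ v ∈ L, pairing u v = 0) ∧
    Module.finrank K ↥L = Module.finrank K V

/-- The Dirac sum `L₁ + L₂ = {(X, α + β) : (X, α) ∈ L₁, (X, β) ∈ L₂}`. -/
def diracSum (L₁ L₂ : Submodule K (V × Module.Dual K V)) :
    Submodule K (V × Module.Dual K V) where
  carrier := {p | ∃ α β : Module.Dual K V, (p.1, α) ∈ L₁ ∧ (p.1, β) ∈ L₂ ∧ p.2 = α + β}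
  zero_mem' := ⟨0, 0, L₁.zero_mem, L₂.zero_mem, by simp⟩
  add_mem' := by
    rintro p q ⟨α, β, h1, h2, h3⟩ ⟨α', β', h1', h2', h3'⟩
    refine ⟨α + α', β + β', L₁.add_mem h1 h1', L₂.add_mem h2 h2', ?_⟩
    show p.2 + q.2 = _
    rw [h3, h3']; abel
  smul_mem' := by
    rintro c p ⟨α, β, h1, h2, h3⟩
    refine ⟨c • α, c • β, L₁.smul_mem c h1, L₂.smul_mem c h2, ?_⟩
    show c • p.2 = _
    rw [h3, smul_add]

end Defs


/-- Auxiliary rank computation: if `g : M →ₗ N` is surjective and `Φ` restricted to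
`ker g` is injective with image `D`, then `finrank D + finrank N = finrank M`. -/
lemma aux_finrank {K M N P : Type*} [Field K] [AddCommGroup M] [Module K M]
    [AddCommGroup N] [Module K N] [AddCommGroup P] [Module K P] [FiniteDimensional K M]
    (g : M →ₗ[K] N) (hg : Function.Surjective g)
    (Φ : M →ₗ[K] P)
    (hΦ0 : ∀ p, g p = 0 → Φ p = 0 → p = 0)
    (D : Submodule K P)
    (hD : LinearMap.range (Φ.comp (LinearMap.ker g).subtype) = D) :
    Module.finrank K D + Module.finrank K N = Module.finrank K M := by
  set φ := Φ.comp (LinearMap.ker g).subtype with hφ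
  have hφ0 : ∀ s : ↥(LinearMap.ker g), φ s = 0 → s = 0 := by
    intro s h
    exact Subtype.ext (hΦ0 s.1 (LinearMap.mem_ker.mp s.2) h)
  have hinj : Function.Injective φ :=
    LinearMap.ker_eq_bot.mp (LinearMap.ker_eq_bot'.mpr hφ0)
  have h1 : Module.finrank K D = Module.finrank K (LinearMap.ker g) := by
    rw [← hD]
    exact LinearMap.finrank_range_of_inj hinj
  have h2 := LinearMap.finrank_range_add_finrank_ker g
  rw [LinearMap.range_eq_top.mpr hg, finrank_top] at h2
  rw [h1, add_comm]
  exact h2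

set_option maxHeartbeats 1000000 in
theorem dirac_sum_isLagrangian
    {K V : Type*} [Field K] [AddCommGroup V] [Module K V] [FiniteDimensional K V]
    (hchar : (2 : K) ≠ 0)
    (L₁ L₂ : Submodule K (V × Module.Dual K V))
    (hL₁ : IsLagrangian L₁) (hL₂ : IsLagrangian L₂)
    (htrans : Submodule.map (LinearMap.fst K V (Module.Dual K V)) L₁ ⊔
      Submodule.map (LinearMap.fst K V (Module.Dual K V)) L₂ = ⊤) :
    IsLagrangian (diracSum L₁ L₂) := by
  classical
  obtain ⟨h1iso, h1dim⟩ := hL₁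
  obtain ⟨h2iso, h2dim⟩ := hL₂
  -- a key consequence of transversality: every vector is a sum of projections
  have hsplit : ∀ v : V, ∃ (a b : V) (α β : Module.Dual K V),
      (a, α) ∈ L₁ ∧ (b, β) ∈ L₂ ∧ a + b = v := by
    intro v
    have hv : v ∈ Submodule.map (LinearMap.fst K V (Module.Dual K V)) L₁ ⊔
        Submodule.map (LinearMap.fst K V (Module.Dual K V)) L₂ := by
      rw [htrans]; exact Submodule.mem_top
    obtain ⟨a, ha, b, hb, hab⟩ := Submodule.mem_sup.mp hv
    obtain ⟨x, hx, hx1⟩ := ha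
    obtain ⟨y, hy, hy1⟩ := hb
    exact ⟨a, b, x.2, y.2, by simpa [← hx1] using hx, by simpa [← hy1] using hy, hab⟩
  constructor
  · rintro u ⟨α, β, ha, hb, hu⟩ v ⟨α', β', ha', hb', hv⟩
    have e1 := h1iso _ ha _ ha'
    have e2 := h2iso _ hb _ hb'
    simp only [pairing] at e1 e2 ⊢
    rw [hu, hv]
    simp only [LinearMap.add_apply]
    linear_combination e1 + e2
  · -- dimension count
    let π₁ : L₁ →ₗ[K] V := (LinearMap.fst K V (Module.Dual K V)).comp L₁.subtype
    let π₂ : L₂ →ₗ[K] V := (LinearMap.fst K V (Module.Dual K V)).comp L₂.subtype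
    let g : (L₁ × L₂) →ₗ[K] V :=
      π₁.comp (LinearMap.fst K L₁ L₂) - π₂.comp (LinearMap.snd K L₁ L₂)
    have hg0 : ∀ p : ↥L₁ × ↥L₂, g p = 0 ↔
        (p.1 : V × Module.Dual K V).1 = (p.2 : V × Module.Dual K V).1 := by
      intro p
      simp only [g, π₁, π₂, LinearMap.sub_apply, LinearMap.comp_apply,
        LinearMap.fst_apply, LinearMap.snd_apply, Submodule.coe_subtype]
      exact sub_eq_zero
    have hg_surj : Function.Surjective g := by
      intro v
      obtain ⟨a, b, α, β, ha, hb, hab⟩ := hsplit v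
      refine ⟨(⟨(a, α), ha⟩, -⟨(b, β), hb⟩), ?_⟩
      simp only [g, π₁, π₂, LinearMap.sub_apply, LinearMap.comp_apply,
        LinearMap.fst_apply, LinearMap.snd_apply, Submodule.coe_subtype]
      simp only [Submodule.coe_neg, Prod.fst_neg, sub_neg_eq_add]
      exact hab
    let Φ : (L₁ × L₂) →ₗ[K] V × Module.Dual K V :=
      ((LinearMap.fst K V (Module.Dual K V)).comp
          (L₁.subtype.comp (LinearMap.fst K L₁ L₂))).prod
        (((LinearMap.snd K V (Module.Dual K V)).comp
            (L₁.subtype.comp (LinearMap.fst K L₁ L₂))) +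
          ((LinearMap.snd K V (Module.Dual K V)).comp
            (L₂.subtype.comp (LinearMap.snd K L₁ L₂))))
    have hΦ : ∀ p : L₁ × L₂, Φ p =
        ((p.1 : V × Module.Dual K V).1,
          (p.1 : V × Module.Dual K V).2 + (p.2 : V × Module.Dual K V).2) := by
      intro p; rfl
    have hrange : LinearMap.range (Φ.comp (LinearMap.ker g).subtype) = diracSum L₁ L₂ := by
      ext p
      constructor
      · rintro ⟨⟨⟨x, y⟩, hs⟩, rfl⟩
        have hxy : (x : V × Module.Dual K V).1 = (y : V × Module.Dual K V).1 :=
          (hg0 (x, y)).mp (LinearMap.mem_ker.mp hs)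
        refine ⟨(x : V × Module.Dual K V).2, (y : V × Module.Dual K V).2, ?_, ?_, rfl⟩
        · exact x.2
        · show ((x : V × Module.Dual K V).1, (y : V × Module.Dual K V).2) ∈ L₂
          rw [hxy]
          exact y.2
      · rintro ⟨α, β, ha, hb, hp⟩
        refine ⟨⟨(⟨(p.1, α), ha⟩, ⟨(p.1, β), hb⟩),
          LinearMap.mem_ker.mpr ((hg0 _).mpr rfl)⟩, ?_⟩
        show ((p.1, α + β) : V × Module.Dual K V) = p
        rw [← hp]
    have hΦ0 : ∀ p : ↥L₁ × ↥L₂, g p = 0 → Φ p = 0 → p = 0 := by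
      rintro ⟨x, y⟩ hg' h0
      have hxy : (x : V × Module.Dual K V).1 = (y : V × Module.Dual K V).1 :=
        (hg0 (x, y)).mp hg'
      have h0' : ((x : V × Module.Dual K V).1,
          (x : V × Module.Dual K V).2 + (y : V × Module.Dual K V).2)
          = (0 : V × Module.Dual K V) := h0
      rw [Prod.ext_iff] at h0'
      obtain ⟨h1, h2⟩ := h0'
      simp only [Prod.fst_zero, Prod.snd_zero] at h1 h2
      have hy1 : (y : V × Module.Dual K V).1 = 0 := hxy ▸ h1
      have hα : (x : V × Module.Dual K V).2 = 0 := by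
        ext v
        obtain ⟨a, b, α, β, ha, hb, hab⟩ := hsplit v
        have ea : (x : V × Module.Dual K V).2 a = 0 := by
          have h1a := h1iso _ x.2 _ ha
          simp only [pairing] at h1a
          rw [h1] at h1a
          simpa using h1a
        have eb : (x : V × Module.Dual K V).2 b = 0 := by
          have hxy2 : (y : V × Module.Dual K V).2 = -(x : V × Module.Dual K V).2 := by
            rw [eq_neg_iff_add_eq_zero, add_comm]; exact h2
          have h2b := h2iso _ y.2 _ hb
          simp only [pairing] at h2b
          rw [hy1, hxy2] at h2b
          simp only [LinearMap.neg_apply, map_zero] at h2b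
          linear_combination -h2b
        simp only [LinearMap.zero_apply]
        calc (x : V × Module.Dual K V).2 v
            = (x : V × Module.Dual K V).2 a + (x : V × Module.Dual K V).2 b := by
              rw [← map_add, hab]
          _ = 0 := by rw [ea, eb]; ring
      have hβ : (y : V × Module.Dual K V).2 = 0 := by
        rw [hα, zero_add] at h2; exact h2
      have hx0 : (x : V × Module.Dual K V) = 0 := by
        have hxe : (x : V × Module.Dual K V)
            = ((x : V × Module.Dual K V).1, (x : V × Module.Dual K V).2) := rfl
        rw [hxe, h1, hα]; rfl
      have hy0 : (y : V × Module.Dual K V) = 0 := by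
        have hye : (y : V × Module.Dual K V)
            = ((y : V × Module.Dual K V).1, (y : V × Module.Dual K V).2) := rfl
        rw [hye, hy1, hβ]; rfl
      exact Prod.ext (Subtype.ext hx0) (Subtype.ext hy0)
    clear_value π₁ π₂ g Φ
    have key := aux_finrank (K := K) (M := ↥L₁ × ↥L₂) (N := V) (P := V × Module.Dual K V) g hg_surj Φ hΦ0 (diracSum L₁ L₂) hrange
    have hprod : finrank K (↥L₁ × ↥L₂) = finrank K V + finrank K V := by
      haveI := Module.Free.of_divisionRing K ↥L₁
      haveI := Module.Free.of_divisionRing K ↥L₂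
      rw [Module.finrank_prod, h1dim, h2dim]
    rw [hprod] at key
    omega
end

section
/- Let L₁ and L₂ be Lagrangian subspaces of V ⊕ V* that are transverse, i.e. pr_V(L₁) + pr_V(L₂) = V. Then the map (X, ξ) ↦ X restricts to a linear isomorphism from L₁ ∩ L₂ onto (L₂ − L₁) ∩ (V ⊕ 0), where L₂ − L₁ = {(X, β − α) : (X, α) ∈ L₁, (X, β) ∈ L₂}. -/
open Module

section Defs

variable {K V : Type*} [Field K] [AddCommGroup V] [Module K V]

/-- The Dirac difference `M − N = {(X, β − α) : (X, α) ∈ N, (X, β) ∈ M}`. -/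
def diracDiff (M N : Submodule K (V × Module.Dual K V)) :
    Submodule K (V × Module.Dual K V) where
  carrier := {p | ∃ α β : Module.Dual K V, (p.1, α) ∈ N ∧ (p.1, β) ∈ M ∧ p.2 = β - α}
  zero_mem' := ⟨0, 0, N.zero_mem, M.zero_mem, by simp⟩
  add_mem' := by
    rintro p q ⟨α, β, h1, h2, h3⟩ ⟨α', β', h1', h2', h3'⟩
    refine ⟨α + α', β + β', N.add_mem h1 h1', M.add_mem h2 h2', ?_⟩
    show p.2 + q.2 = _
    rw [h3, h3']; abel
  smul_mem' := by
    rintro c p ⟨α, β, h1, h2, h3⟩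
    refine ⟨c • α, c • β, N.smul_mem c h1, M.smul_mem c h2, ?_⟩
    show c • p.2 = _
    rw [h3, smul_sub]

end Defs

theorem anchor_iso_of_transverse
    {K V : Type*} [Field K] [AddCommGroup V] [Module K V] [FiniteDimensional K V]
    (hchar : (2 : K) ≠ 0)
    (L₁ L₂ : Submodule K (V × Module.Dual K V))
    (hL₁ : IsLagrangian L₁) (hL₂ : IsLagrangian L₂)
    (htrans : Submodule.map (LinearMap.fst K V (Module.Dual K V)) L₁ ⊔
      Submodule.map (LinearMap.fst K V (Module.Dual K V)) L₂ = ⊤) :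
    ∃ e : ↥(L₁ ⊓ L₂) ≃ₗ[K]
        ↥(Submodule.comap (LinearMap.inl K V (Module.Dual K V)) (diracDiff L₂ L₁)),
      ∀ u : ↥(L₁ ⊓ L₂), ((e u : V) = ((u : V × Module.Dual K V)).1) := by
  set T := Submodule.comap (LinearMap.inl K V (Module.Dual K V)) (diracDiff L₂ L₁) with hT
  have hmem : ∀ u : ↥(L₁ ⊓ L₂), (u : V × Module.Dual K V).1 ∈ T := by
    rintro ⟨⟨X, ξ⟩, h1, h2⟩
    exact ⟨ξ, ξ, h1, h2, by simp⟩
  let f : ↥(L₁ ⊓ L₂) →ₗ[K] ↥T :=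
    { toFun := fun u => ⟨(u : V × Module.Dual K V).1, hmem u⟩
      map_add' := fun u v => rfl
      map_smul' := fun c u => rfl }
  have hker : ∀ u : ↥(L₁ ⊓ L₂), f u = 0 → u = 0 := by
    rintro ⟨⟨X, ξ⟩, h1, h2⟩ hu
    have hX : X = 0 := congrArg Subtype.val hu
    subst hX
    have hξ : ξ = 0 := by
      ext Y
      have hY : Y ∈ (⊤ : Submodule K V) := Submodule.mem_top
      rw [← htrans] at hY
      obtain ⟨a, ha, b, hb, rfl⟩ := Submodule.mem_sup.mp hY
      obtain ⟨p, hp, hpa⟩ := ha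
      obtain ⟨q, hq, hqb⟩ := hb
      have h1' : pairing (0, ξ) p = 0 := hL₁.1 _ h1 _ hp
      have h2' : pairing (0, ξ) q = 0 := hL₂.1 _ h2 _ hq
      simp only [pairing, map_zero, add_zero] at h1' h2'
      simp [← hpa, ← hqb, h1', h2']
    subst hξ
    rfl
  have hinj : Function.Injective f :=
    by
    intro u v huv
    have h := hker (u - v) (Subtype.ext (by
      have huv' : (u : V × Module.Dual K V).1 = (v : V × Module.Dual K V).1 :=
        congrArg Subtype.val huv
      show (((u - v : ↥(L₁ ⊓ L₂)) : V × Module.Dual K V)).1 = 0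
      simp [huv']))
    exact sub_eq_zero.mp h
  have hsurj : Function.Surjective f := by
    rintro ⟨X, α, β, h1, h2, hβα⟩
    have : β = α := by
      have : (0 : Module.Dual K V) = β - α := hβα
      linear_combination (norm := abel) -this
    subst this
    exact ⟨⟨(X, β), h1, h2⟩, rfl⟩
  exact ⟨LinearEquiv.ofBijective f ⟨hinj, hsurj⟩, fun u => rfl⟩
end

section
/- Let L ⊆ V ⊕ V* be a Lagrangian subspace, set E := {X ∈ V : (X, 0) ∈ L}, and let F ⊆ V be any complement, V = E ⊕ F. Then: (a) the image of L under the projection V ⊕ V* → V* equals the annihilator Ann(E); (b) there exists a unique linear map σ : Ann(E) → F such that L = {(X + σ(ζ), ζ) : X ∈ E, ζ ∈ Ann(E)}; (c) this σ is skew, i.e. ζ₂(σ(ζ₁)) = −ζ₁(σ(ζ₂)) for all ζ₁, ζ₂ ∈ Ann(E). -/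
open Module

set_option maxHeartbeats 2000000 in
set_option maxRecDepth 100000 in
theorem lagrangian_is_poisson_type
    {K V : Type*} [Field K] [AddCommGroup V] [Module K V] [FiniteDimensional K V]
    (hchar : (2 : K) ≠ 0)
    (L : Submodule K (V × Module.Dual K V)) (hL : IsLagrangian L)
    (E : Submodule K V)
    (hE : E = Submodule.comap (LinearMap.inl K V (Module.Dual K V)) L)
    (F : Submodule K V) (hEF : IsCompl E F) :
    Submodule.map (LinearMap.snd K V (Module.Dual K V)) L = E.dualAnnihilator ∧
    (∃! σ : ↥E.dualAnnihilator →ₗ[K] ↥F,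
      (L : Set (V × Module.Dual K V)) =
        {p | ∃ X ∈ E, ∃ ζ : ↥E.dualAnnihilator,
          p = (X + (σ ζ : V), (ζ : Module.Dual K V))}) ∧
    ∀ σ : ↥E.dualAnnihilator →ₗ[K] ↥F,
      (L : Set (V × Module.Dual K V)) =
        {p | ∃ X ∈ E, ∃ ζ : ↥E.dualAnnihilator,
          p = (X + (σ ζ : V), (ζ : Module.Dual K V))} →
      ∀ ζ₁ ζ₂ : ↥E.dualAnnihilator,
        (ζ₂ : Module.Dual K V) (σ ζ₁) = - (ζ₁ : Module.Dual K V) (σ ζ₂) := by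
  obtain ⟨hiso, hdim⟩ := hL
  have hEinL : ∀ X ∈ E, ((X, 0) : V × Module.Dual K V) ∈ L := by
    intro X hX; rw [hE] at hX; exact hX
  have hmemE : ∀ x : V × Module.Dual K V, x ∈ L → x.2 = 0 → x.1 ∈ E := by
    intro x hx h2
    rw [hE]
    refine Submodule.mem_comap.mpr ?_
    rw [LinearMap.inl_apply, ← h2, Prod.mk.eta]
    exact hx
  -- part (a), the easy inclusion
  have hsub : Submodule.map (LinearMap.snd K V (Module.Dual K V)) L ≤ E.dualAnnihilator := by
    rintro ζ ⟨⟨X, ζ'⟩, hx, rfl⟩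
    rw [Submodule.mem_dualAnnihilator]
    intro Y hY
    have := hiso _ hx _ (hEinL Y hY)
    simpa [pairing] using this
  -- the restriction of the second projection to L
  set f0 : ↥L →ₗ[K] Module.Dual K V :=
    (LinearMap.snd K V (Module.Dual K V)).domRestrict L with hf0
  -- the inclusion of E into L
  set j : ↥E →ₗ[K] ↥L :=
    LinearMap.codRestrict L ((LinearMap.inl K V (Module.Dual K V)).comp E.subtype)
      (fun X => hEinL X X.2) with hj
  have hj1 : ∀ X : E, ((j X : V × Module.Dual K V)) = ((X : V), (0 : Module.Dual K V)) := by
    intro X; rfl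
  -- transport through a coordinate model of L to avoid nested submodules of L
  haveI : Module.Free K ↥L := Module.Free.of_divisionRing K ↥L
  set n := Module.finrank K ↥L with hn
  set e : (Fin n → K) ≃ₗ[K] ↥L := (Module.finBasis K ↥L).equivFun.symm with he
  set f : (Fin n → K) →ₗ[K] Module.Dual K V := f0.comp (e : (Fin n → K) →ₗ[K] ↥L) with hf
  have hrange : LinearMap.range f = Submodule.map (LinearMap.snd K V (Module.Dual K V)) L := by
    rw [hf, LinearMap.range_comp, LinearEquiv.range, Submodule.map_top, hf0,
      LinearMap.range_domRestrict]
  set m : ↥E →ₗ[K] (Fin n → K) := (e.symm : ↥L →ₗ[K] (Fin n → K)).comp j with hm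
  have hmval : ∀ X : E, m X = e.symm (j X) := fun X => rfl
  have hfval : ∀ x : Fin n → K, f x = f0 (e x) := fun x => rfl
  have hf0val : ∀ y : ↥L, f0 y = ((y : V × Module.Dual K V)).2 := fun y => rfl
  have eker : E ≃ₗ[K] LinearMap.ker f := by
    refine LinearEquiv.ofBijective
      (LinearMap.codRestrict (LinearMap.ker f) m (fun X => ?_)) ⟨?_, ?_⟩
    · rw [LinearMap.mem_ker, hmval, hfval, LinearEquiv.apply_symm_apply, hf0val, hj1]
    · intro x y hxy
      have h1 : m x = m y := congrArg Subtype.val hxy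
      rw [hmval, hmval] at h1
      have h2 : j x = j y := by
        have h3 := congrArg e h1
        rwa [LinearEquiv.apply_symm_apply, LinearEquiv.apply_symm_apply] at h3
      have h4 : (((x : V), (0 : Module.Dual K V)) : V × Module.Dual K V) = ((y : V), 0) := by
        rw [← hj1 x, ← hj1 y, h2]
      exact Subtype.ext (congrArg Prod.fst h4)
    · rintro ⟨x, hxk⟩
      have hex : f x = 0 := hxk
      rw [hfval, hf0val] at hex
      have h1 : ((e x : V × Module.Dual K V)).1 ∈ E := hmemE _ (e x).2 hex
      refine ⟨⟨_, h1⟩, ?_⟩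
      apply Subtype.ext
      show m ⟨_, h1⟩ = x
      rw [hmval]
      have hjx : j ⟨_, h1⟩ = e x := by
        apply Subtype.ext
        rw [hj1]
        exact Prod.ext_iff.mpr ⟨rfl, hex.symm⟩
      rw [hjx, LinearEquiv.symm_apply_apply]
  have hrk : Module.finrank K (LinearMap.ker f) = Module.finrank K E := by
    have h := eker.lift_rank_eq
    simp only [Module.finrank]
    rw [← Cardinal.toNat_lift (Module.rank K ↥(LinearMap.ker f)),
      ← Cardinal.toNat_lift (Module.rank K ↥E), ← h]
  have hA : Module.finrank K E.dualAnnihilator = Module.finrank K V - Module.finrank K E := by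
    have h1 : Module.finrank K ↥E.dualAnnihilator = Module.finrank K (V ⧸ E) :=
      (Subspace.quotEquivAnnihilator E).symm.finrank_eq
    have h2 := Submodule.finrank_quotient_add_finrank E
    omega
  have hdomain : Module.finrank K (Fin n → K) = Module.finrank K V := by
    rw [Module.finrank_fin_fun]
    exact hdim
  have hrankeq : Module.finrank K (Submodule.map (LinearMap.snd K V (Module.Dual K V)) L)
      = Module.finrank K E.dualAnnihilator := by
    have h3 := LinearMap.finrank_range_add_finrank_ker f
    rw [hrange, hrk, hdomain] at h3
    have hle : Module.finrank K E ≤ Module.finrank K V := Submodule.finrank_le E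
    omega
  have parta : Submodule.map (LinearMap.snd K V (Module.Dual K V)) L = E.dualAnnihilator :=
    Submodule.eq_of_le_of_finrank_eq hsub hrankeq
  -- construction of σ
  have hcod : ∀ x : ↥L, f0 x ∈ E.dualAnnihilator := by
    intro x
    rw [← parta]
    exact ⟨x, x.2, rfl⟩
  set p : ↥L →ₗ[K] ↥E.dualAnnihilator :=
    LinearMap.codRestrict _ f0 (fun x => hcod x) with hp
  have hpsurj : LinearMap.range p = ⊤ := by
    rw [Submodule.eq_top_iff']
    rintro ⟨ζ, hζ⟩
    rw [← parta] at hζ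
    obtain ⟨x, hx, hxζ⟩ := hζ
    exact ⟨⟨x, hx⟩, Subtype.ext (by simpa [hp, hf0] using hxζ)⟩
  haveI : Module.Free K ↥E.dualAnnihilator := Module.Free.of_divisionRing K ↥E.dualAnnihilator
  haveI : Module.Projective K ↥E.dualAnnihilator := Module.Projective.of_free
  obtain ⟨s, hs⟩ := p.exists_rightInverse_of_surjective hpsurj
  set projE := E.projectionOnto F hEF with hprojE
  set projF := F.projectionOnto E hEF.symm with hprojF
  set g : ↥L →ₗ[K] ↥F := projF.comp ((LinearMap.fst K V (Module.Dual K V)).domRestrict L) with hg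
  set σ : ↥E.dualAnnihilator →ₗ[K] ↥F := g.comp s with hσ
  have hps : ∀ ζ : ↥E.dualAnnihilator,
      ((s ζ : V × Module.Dual K V)).2 = (ζ : Module.Dual K V) := by
    intro ζ
    have h1 : p (s ζ) = ζ := by rw [← LinearMap.comp_apply, hs]; rfl
    have h2 : (p (s ζ) : Module.Dual K V) = (ζ : Module.Dual K V) := congrArg _ h1
    exact h2
  have hgval : ∀ x : ↥L, g x = projF ((x : V × Module.Dual K V)).1 := by
    intro x; rfl
  -- σ (p x) = g x for x in L
  have hgp : ∀ x : ↥L, σ (p x) = g x := by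
    intro x
    have hd2 : ((x : V × Module.Dual K V) - (s (p x) : V × Module.Dual K V)).2 = 0 := by
      rw [Prod.snd_sub, hps (p x)]
      show _ - f0 x = 0
      rw [sub_eq_zero]
      rfl
    have hd : ((x : V × Module.Dual K V) - (s (p x) : V × Module.Dual K V)).1 ∈ E :=
      hmemE _ (sub_mem x.2 (s (p x)).2) hd2
    have h0 := Submodule.projectionOnto_apply_of_mem_right hEF.symm hd
    rw [Prod.fst_sub, map_sub, sub_eq_zero] at h0
    show g (s (p x)) = g x
    rw [hgval, hgval, h0]
  -- key membership : (σ ζ, ζ) ∈ L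
  have hσmem : ∀ ζ : ↥E.dualAnnihilator, ((σ ζ : V), (ζ : Module.Dual K V)) ∈ L := by
    intro ζ
    have hy := (s ζ).2
    have hsum := Submodule.projection_add_projection_eq_self hEF
      ((s ζ : V × Module.Dual K V)).1
    have heq : (((σ ζ : V), (ζ : Module.Dual K V)) : V × Module.Dual K V)
        = (s ζ : V × Module.Dual K V) - ((projE ((s ζ : V × Module.Dual K V)).1 : V), 0) := by
      have hσval : (σ ζ : V) = (projF ((s ζ : V × Module.Dual K V)).1 : V) := by
        show ((g (s ζ) : V)) = _
        rw [hgval]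
      refine Prod.ext_iff.mpr ⟨?_, ?_⟩
      · rw [Prod.fst_sub, hσval, eq_sub_iff_add_eq, add_comm]
        exact hsum
      · rw [Prod.snd_sub, hps ζ]
        simp
    rw [heq]
    exact sub_mem hy (hEinL _ (projE _).2)
  have hset : (L : Set (V × Module.Dual K V)) =
      {q | ∃ X ∈ E, ∃ ζ : ↥E.dualAnnihilator,
        q = (X + (σ ζ : V), (ζ : Module.Dual K V))} := by
    ext x
    constructor
    · intro hx
      refine ⟨(projE x.1 : V), (projE x.1).2, p ⟨x, hx⟩, ?_⟩
      have h1 : σ (p ⟨x, hx⟩) = g ⟨x, hx⟩ := hgp ⟨x, hx⟩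
      have hsum := Submodule.projection_add_projection_eq_self hEF x.1
      refine Prod.ext_iff.mpr ⟨?_, ?_⟩
      · rw [h1, hgval]
        exact hsum.symm
      · rfl
    · rintro ⟨X, hX, ζ, rfl⟩
      have heq : ((X + (σ ζ : V), (ζ : Module.Dual K V)) : V × Module.Dual K V)
          = ((X, 0) : V × Module.Dual K V) + ((σ ζ : V), (ζ : Module.Dual K V)) := by
        refine Prod.ext_iff.mpr ⟨rfl, ?_⟩
        simp
      rw [heq]
      exact add_mem (hEinL X hX) (hσmem ζ)
  -- skewness helper: any σ' satisfying the set equality has (σ' ζ, ζ) ∈ L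
  have hskew : ∀ σ' : ↥E.dualAnnihilator →ₗ[K] ↥F,
      (L : Set (V × Module.Dual K V)) =
        {q | ∃ X ∈ E, ∃ ζ : ↥E.dualAnnihilator,
          q = (X + (σ' ζ : V), (ζ : Module.Dual K V))} →
      ∀ ζ : ↥E.dualAnnihilator, (((σ' ζ : V), (ζ : Module.Dual K V)) : V × Module.Dual K V) ∈ L := by
    intro σ' hset' ζ
    have hx : (((σ' ζ : V), (ζ : Module.Dual K V)) : V × Module.Dual K V) ∈
        (L : Set (V × Module.Dual K V)) := by
      rw [hset']
      exact ⟨0, zero_mem E, ζ, by rw [zero_add]⟩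
    exact hx
  refine ⟨parta, ⟨σ, hset, ?_⟩, ?_⟩
  · intro σ' hset'
    ext ζ
    have h1 := hskew σ' hset' ζ
    have h2 := hσmem ζ
    have h4 : (((σ' ζ : V) - (σ ζ : V), (0 : Module.Dual K V)) : V × Module.Dual K V) ∈ L := by
      have h3 := sub_mem h1 h2
      have : (((σ' ζ : V), (ζ : Module.Dual K V)) : V × Module.Dual K V)
          - ((σ ζ : V), (ζ : Module.Dual K V))
          = ((σ' ζ : V) - (σ ζ : V), (0 : Module.Dual K V)) := by
        refine Prod.ext_iff.mpr ⟨rfl, ?_⟩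
        rw [Prod.snd_sub, sub_self]
      rwa [this] at h3
    have h5 : (σ' ζ : V) - (σ ζ : V) ∈ E := hmemE _ h4 rfl
    have h6 : (σ' ζ : V) - (σ ζ : V) ∈ F := sub_mem (σ' ζ).2 (σ ζ).2
    have h7 : (σ' ζ : V) - (σ ζ : V) = 0 := by
      have hmem : (σ' ζ : V) - (σ ζ : V) ∈ E ⊓ F := ⟨h5, h6⟩
      rw [hEF.inf_eq_bot] at hmem
      simpa using hmem
    exact sub_eq_zero.mp h7
  · intro σ' hset' ζ₁ ζ₂
    have h1 := hskew σ' hset' ζ₁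
    have h2 := hskew σ' hset' ζ₂
    have h3 := hiso _ h1 _ h2
    simp only [pairing] at h3
    linear_combination h3
end

section
/- Let V be a vector space over a field, I₀ : V → V a linear map with I₀² = −id, Q : V* → V a linear map with I₀ ∘ Q = Q ∘ I₀*, and F : V → V* a linear map satisfying F ∘ I₀ + I₀* ∘ F = F ∘ Q ∘ F. Then I₁ := I₀ − Q∘F satisfies I₁² = −id. If moreover Q is skew (η(Q(ξ)) = −ξ(Q(η)) for all ξ, η ∈ V*) and F is skew ((F(X))(Y) = −(F(Y))(X) for all X, Y ∈ V), then also I₁ ∘ Q = Q ∘ I₁*. -/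
open Module

theorem deformed_complex_structure
    {K V : Type*} [Field K] [AddCommGroup V] [Module K V]
    (I₀ : V →ₗ[K] V) (hI₀ : I₀ ∘ₗ I₀ = -LinearMap.id)
    (Q : Module.Dual K V →ₗ[K] V) (hIQ : I₀ ∘ₗ Q = Q ∘ₗ I₀.dualMap)
    (F : V →ₗ[K] Module.Dual K V)
    (hF : F ∘ₗ I₀ + I₀.dualMap ∘ₗ F = (F ∘ₗ Q) ∘ₗ F) :
    (I₀ - Q ∘ₗ F) ∘ₗ (I₀ - Q ∘ₗ F) = -LinearMap.id ∧
    ((∀ ξ η : Module.Dual K V, η (Q ξ) = - ξ (Q η)) → (∀ x y : V, F x y = - F y x) →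
      (I₀ - Q ∘ₗ F) ∘ₗ Q = Q ∘ₗ (I₀ - Q ∘ₗ F).dualMap) := by
  have key : (Q ∘ₗ F) ∘ₗ (Q ∘ₗ F) = (Q ∘ₗ F) ∘ₗ I₀ + I₀ ∘ₗ (Q ∘ₗ F) := by
    calc (Q ∘ₗ F) ∘ₗ (Q ∘ₗ F) = Q ∘ₗ ((F ∘ₗ Q) ∘ₗ F) := by
          rw [LinearMap.comp_assoc, LinearMap.comp_assoc]
      _ = Q ∘ₗ (F ∘ₗ I₀ + I₀.dualMap ∘ₗ F) := by rw [hF]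
      _ = (Q ∘ₗ F) ∘ₗ I₀ + (Q ∘ₗ I₀.dualMap) ∘ₗ F := by
          ext x; simp
      _ = (Q ∘ₗ F) ∘ₗ I₀ + I₀ ∘ₗ (Q ∘ₗ F) := by
          rw [← hIQ]; ext x; simp
  constructor
  · have : (I₀ - Q ∘ₗ F) ∘ₗ (I₀ - Q ∘ₗ F)
        = I₀ ∘ₗ I₀ - I₀ ∘ₗ (Q ∘ₗ F) - (Q ∘ₗ F) ∘ₗ I₀ + (Q ∘ₗ F) ∘ₗ (Q ∘ₗ F) := by
      ext x; simp [map_sub]; abel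
    rw [this, key, hI₀]; abel
  · intro hQs hFs
    apply LinearMap.ext; intro ξ
    have h1 : (Q ∘ₗ F).dualMap ξ = F (Q ξ) := by
      ext x
      have := hQs ξ (F x)
      have h2 := hFs x (Q ξ)
      simp only [LinearMap.dualMap_apply, LinearMap.coe_comp, Function.comp_apply]
      rw [h2] at this
      linear_combination this
    have h3 : (I₀ - Q ∘ₗ F).dualMap ξ = I₀.dualMap ξ - (Q ∘ₗ F).dualMap ξ := by
      ext x; simp
    have h4 : I₀ (Q ξ) = Q (I₀.dualMap ξ) := congrFun (congrArg DFunLike.coe hIQ) ξ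
    simp only [LinearMap.comp_apply, LinearMap.sub_apply, h3, h1, map_sub, h4]
end

section
/- Let V be a finite-dimensional vector space over a field K, σ : V* → V and β : V → V* linear maps such that 1 + β∘σ : V* → V* is invertible, and set ω := (1 + β∘σ)^{-1} ∘ β : V → V*. Then: (a) 1 + σ∘β : V → V is invertible, with inverse 1 − σ∘ω; (b) the graph of β satisfies Γ_β = {(X − σ(ω(X)), ω(X)) : X ∈ V}. -/
open Module

theorem formality_graph_description
    {K V : Type*} [Field K] [AddCommGroup V] [Module K V] [FiniteDimensional K V]
    (σ : Module.Dual K V →ₗ[K] V) (β : V →ₗ[K] Module.Dual K V)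
    (C : Module.Dual K V →ₗ[K] Module.Dual K V)
    (hC1 : ((LinearMap.id : Module.Dual K V →ₗ[K] Module.Dual K V) + β ∘ₗ σ) ∘ₗ C = LinearMap.id)
    (hC2 : C ∘ₗ ((LinearMap.id : Module.Dual K V →ₗ[K] Module.Dual K V) + β ∘ₗ σ) = LinearMap.id) :
    (((LinearMap.id : V →ₗ[K] V) + σ ∘ₗ β) ∘ₗ ((LinearMap.id : V →ₗ[K] V) - σ ∘ₗ (C ∘ₗ β)) = LinearMap.id ∧
     ((LinearMap.id : V →ₗ[K] V) - σ ∘ₗ (C ∘ₗ β)) ∘ₗ ((LinearMap.id : V →ₗ[K] V) + σ ∘ₗ β) = LinearMap.id) ∧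
    LinearMap.range (LinearMap.prod (LinearMap.id : V →ₗ[K] V) β) =
      LinearMap.range (LinearMap.prod ((LinearMap.id : V →ₗ[K] V) - σ ∘ₗ (C ∘ₗ β)) (C ∘ₗ β)) := by
  have h1 : ∀ f, C f + β (σ (C f)) = f := fun f => by
    simpa [LinearMap.comp_apply, LinearMap.add_apply] using LinearMap.congr_fun hC1 f
  have h2 : ∀ f, C f + C (β (σ f)) = f := fun f => by
    simpa [LinearMap.comp_apply, LinearMap.add_apply, map_add] using LinearMap.congr_fun hC2 f
  have e1 : ∀ x : V, β (σ (C (β x))) = β x - C (β x) := fun x => by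
    have := h1 (β x); linear_combination (norm := abel) this
  have e2 : ∀ x : V, C (β (σ (β x))) = β x - C (β x) := fun x => by
    have := h2 (β x); linear_combination (norm := abel) this
  have hA : ((LinearMap.id : V →ₗ[K] V) + σ ∘ₗ β) ∘ₗ
      ((LinearMap.id : V →ₗ[K] V) - σ ∘ₗ (C ∘ₗ β)) = LinearMap.id := by
    refine LinearMap.ext fun x => ?_
    simp only [LinearMap.comp_apply, LinearMap.add_apply, LinearMap.sub_apply,
      LinearMap.id_apply, map_sub, map_add, e1]
    abel
  have hB : ((LinearMap.id : V →ₗ[K] V) - σ ∘ₗ (C ∘ₗ β)) ∘ₗ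
      ((LinearMap.id : V →ₗ[K] V) + σ ∘ₗ β) = LinearMap.id := by
    refine LinearMap.ext fun x => ?_
    simp only [LinearMap.comp_apply, LinearMap.add_apply, LinearMap.sub_apply,
      LinearMap.id_apply, map_sub, map_add, e2]
    abel
  refine ⟨⟨hA, hB⟩, ?_⟩
  have key : β ∘ₗ ((LinearMap.id : V →ₗ[K] V) - σ ∘ₗ (C ∘ₗ β)) = C ∘ₗ β := by
    refine LinearMap.ext fun x => ?_
    simp only [LinearMap.comp_apply, LinearMap.sub_apply, LinearMap.id_apply, map_sub, e1]
    abel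
  have hfac : LinearMap.prod ((LinearMap.id : V →ₗ[K] V) - σ ∘ₗ (C ∘ₗ β)) (C ∘ₗ β)
      = (LinearMap.prod (LinearMap.id : V →ₗ[K] V) β) ∘ₗ
        ((LinearMap.id : V →ₗ[K] V) - σ ∘ₗ (C ∘ₗ β)) := by
    refine LinearMap.ext fun x => ?_
    simp only [LinearMap.prod_apply, LinearMap.comp_apply, Pi.prod, LinearMap.id_apply]
    exact Prod.ext rfl (LinearMap.congr_fun key x).symm
  have hsurj : LinearMap.range ((LinearMap.id : V →ₗ[K] V) - σ ∘ₗ (C ∘ₗ β)) = ⊤ :=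
    LinearMap.range_eq_top.mpr fun x =>
      ⟨((LinearMap.id : V →ₗ[K] V) + σ ∘ₗ β) x, LinearMap.congr_fun hB x⟩
  rw [hfac, LinearMap.range_comp_of_range_eq_top _ hsurj]
end

section
/- Let W = A ⊕ B be a direct sum decomposition of a finite-dimensional complex vector space, with P_B : W → B the projection along A. Let φ : B → A be a ℂ-linear map, and let σ, ρ : W* → W be ℂ-linear maps whose images are contained in A and whose kernels contain Ann(A). Define L^ε := {(X + φ(X) + (σ + ρ)(ζ), ζ − ζ∘φ∘P_B) : X ∈ B, ζ ∈ Ann(B)} ⊆ W ⊕ W*, and B^φ := {X + φ(X) : X ∈ B} ⊆ W. Then: (a) L^ε ∩ (W ⊕ 0) = B^φ ⊕ 0; (b) for every complement F of B^φ in W, with P_F : W → F the projection along B^φ, one has L^ε = {(Y + P_F((σ + ρ)(ξ)), ξ) : Y ∈ B^φ, ξ ∈ Ann(B^φ)}. -/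
open Module

theorem deformed_dirac_is_poisson_type
    {W : Type*} [AddCommGroup W] [Module ℂ W] [FiniteDimensional ℂ W]
    (A B : Submodule ℂ W) (hAB : IsCompl A B)
    (PB : W →ₗ[ℂ] W) (hPB : ∀ x, PB x ∈ B ∧ x - PB x ∈ A)
    (φ : W →ₗ[ℂ] W) (hφ : LinearMap.range φ ≤ A)
    (σ ρ : Module.Dual ℂ W →ₗ[ℂ] W)
    (hσr : LinearMap.range σ ≤ A) (hσk : A.dualAnnihilator ≤ LinearMap.ker σ)
    (hρr : LinearMap.range ρ ≤ A) (hρk : A.dualAnnihilator ≤ LinearMap.ker ρ)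
    (Lε : Set (W × Module.Dual ℂ W))
    (hLε : Lε = {p | ∃ X ∈ B, ∃ ζ ∈ B.dualAnnihilator,
      p = (X + φ X + (σ + ρ) ζ, ζ - ζ ∘ₗ (φ ∘ₗ PB))})
    (Bφ : Submodule ℂ W) (hBφ : Bφ = Submodule.map (LinearMap.id + φ) B) :
    (Lε ∩ {p | p.2 = 0} = {p | p.1 ∈ Bφ ∧ p.2 = 0}) ∧
    ∀ F : Submodule ℂ W, IsCompl Bφ F →
      ∀ PF : W →ₗ[ℂ] W, (∀ x, PF x ∈ F ∧ x - PF x ∈ Bφ) →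
        Lε = {p | ∃ Y ∈ Bφ, ∃ ξ ∈ Bφ.dualAnnihilator, p = (Y + PF ((σ + ρ) ξ), ξ)} := by
  subst hLε hBφ
  have hdisj := Submodule.disjoint_def.mp hAB.disjoint
  have hPBA : ∀ a ∈ A, PB a = 0 := by
    intro a ha
    have h2 : PB a ∈ A := by
      have h3 := A.sub_mem ha (hPB a).2
      simpa using h3
    exact hdisj _ h2 (hPB a).1
  have hPBB : ∀ b ∈ B, PB b = b := by
    intro b hb
    have h2 : b - PB b ∈ B := B.sub_mem hb (hPB b).1
    exact (sub_eq_zero.mp (hdisj _ (hPB b).2 h2)).symm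
  have hφ0 : ∀ x, PB (φ x) = 0 := fun x => hPBA _ (hφ (LinearMap.mem_range_self φ x))
  have hτ0 : ∀ ζ ∈ A.dualAnnihilator, (σ + ρ) ζ = 0 := by
    intro ζ h
    have h1 : σ ζ = 0 := LinearMap.mem_ker.mp (hσk h)
    have h2 : ρ ζ = 0 := LinearMap.mem_ker.mp (hρk h)
    simp [LinearMap.add_apply, h1, h2]
  have hcA : ∀ ζ : Dual ℂ W, (ζ ∘ₗ (φ ∘ₗ PB)) ∈ A.dualAnnihilator := by
    intro ζ
    rw [Submodule.mem_dualAnnihilator]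
    intro a ha
    simp [LinearMap.comp_apply, hPBA a ha]
  have hinv : ∀ ζ : Dual ℂ W,
      (ζ - ζ ∘ₗ (φ ∘ₗ PB)) + (ζ - ζ ∘ₗ (φ ∘ₗ PB)) ∘ₗ (φ ∘ₗ PB) = ζ := by
    intro ζ
    ext x
    simp [LinearMap.comp_apply, hφ0]
  have hA1 : ∀ ζ ∈ B.dualAnnihilator,
      ζ - ζ ∘ₗ (φ ∘ₗ PB) ∈ (Submodule.map (LinearMap.id + φ) B).dualAnnihilator := by
    intro ζ hζ
    rw [Submodule.mem_dualAnnihilator]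
    intro w hw
    rw [Submodule.mem_map] at hw
    obtain ⟨b, hb, rfl⟩ := hw
    rw [Submodule.mem_dualAnnihilator] at hζ
    have hζb : ζ b = 0 := hζ b hb
    simp [LinearMap.sub_apply, LinearMap.comp_apply, LinearMap.add_apply, map_add,
      hφ0, hPBB b hb, hζb]
  have hA2 : ∀ ξ ∈ (Submodule.map (LinearMap.id + φ) B).dualAnnihilator,
      ξ + ξ ∘ₗ (φ ∘ₗ PB) ∈ B.dualAnnihilator := by
    intro ξ hξ
    rw [Submodule.mem_dualAnnihilator]
    intro b hb
    have hmem : b + φ b ∈ Submodule.map (LinearMap.id + φ) B :=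
      ⟨b, hb, by simp⟩
    rw [Submodule.mem_dualAnnihilator] at hξ
    have h0 : ξ (b + φ b) = 0 := hξ _ hmem
    rw [map_add] at h0
    simp only [LinearMap.add_apply, LinearMap.comp_apply, hPBB b hb]
    exact h0
  constructor
  · ext p
    constructor
    · rintro ⟨hp1, hp2⟩
      simp only [Set.mem_setOf_eq] at hp1 hp2 ⊢
      obtain ⟨X, hX, ζ, hζ, rfl⟩ := hp1
      have hζ0 : ζ = 0 := by
        have := hinv ζ
        rw [show ζ - ζ ∘ₗ (φ ∘ₗ PB) = 0 from hp2] at this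
        simpa using this.symm
      subst hζ0
      refine ⟨⟨X, hX, by simp⟩, by simp⟩
    · rintro ⟨h1, h2⟩
      obtain ⟨b, hb, hbe⟩ := h1
      refine ⟨⟨b, hb, 0, Submodule.zero_mem _, ?_⟩, h2⟩
      have : p = (p.1, p.2) := rfl
      rw [this, h2, ← hbe]
      simp
  · intro F hF PF hPF
    ext p
    simp only [Set.mem_setOf_eq]
    constructor
    · rintro ⟨X, hX, ζ, hζ, rfl⟩
      set ξ := ζ - ζ ∘ₗ (φ ∘ₗ PB) with hξdef
      have hξmem := hA1 ζ hζ
      have hτeq : (σ + ρ) ζ = (σ + ρ) ξ := by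
        rw [hξdef, map_sub, hτ0 _ (hcA ζ), sub_zero]
      have hdec := (hPF ((σ + ρ) ξ)).2
      refine ⟨X + φ X + ((σ + ρ) ξ - PF ((σ + ρ) ξ)),
        Submodule.add_mem _ ⟨X, hX, by simp⟩ hdec, ξ, hξmem, ?_⟩
      refine Prod.ext ?_ rfl
      show X + φ X + (σ + ρ) ζ
        = (X + φ X + ((σ + ρ) ξ - PF ((σ + ρ) ξ))) + PF ((σ + ρ) ξ)
      rw [hτeq]
      abel
    · rintro ⟨Y, hY, ξ, hξ, rfl⟩
      obtain ⟨b, hb, rfl⟩ := hY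
      set ζ := ξ + ξ ∘ₗ (φ ∘ₗ PB) with hζdef
      have hζB := hA2 ξ hξ
      have hback : ζ - ζ ∘ₗ (φ ∘ₗ PB) = ξ := by
        ext x
        simp [hζdef, LinearMap.comp_apply, hφ0]
      have hτeq : (σ + ρ) ζ = (σ + ρ) ξ := by
        rw [hζdef, map_add, hτ0 _ (hcA ξ), add_zero]
      obtain ⟨b1, hb1, hb1eq⟩ := (hPF ((σ + ρ) ξ)).2
      refine ⟨b - b1, B.sub_mem hb hb1, ζ, hζB, ?_⟩
      refine Prod.ext ?_ hback.symm
      show (LinearMap.id + φ : W →ₗ[ℂ] W) b + PF ((σ + ρ) ξ)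
        = (b - b1) + φ (b - b1) + (σ + ρ) ζ
      have h2 : PF ((σ + ρ) ξ) = (σ + ρ) ξ - (b1 + φ b1) := by
        rw [LinearMap.add_apply, LinearMap.id_apply] at hb1eq
        rw [hb1eq]
        abel
      rw [hτeq, h2, map_sub]
      simp only [LinearMap.add_apply, LinearMap.id_apply]
      abel
end

section
/- Let V be a finite-dimensional complex vector space, g : V → V* an invertible linear map, and I, J, K : V → V linear maps satisfying I² = J² = K² = −id, I∘J = K, J∘K = I, and K∘I = J. Set ω_I := g∘I, ω_J := g∘J, ω_K := g∘K, and σ := (1/4)(ω_J^{-1} − i·ω_K^{-1}) : V* → V. Then: (a) σ ∘ (ω_J − i·ω_K) = 0 and (ω_J − i·ω_K) ∘ σ = 0; (b) σ ∘ ω_I ∘ σ = 0; (c) 4·(ω_I ∘ σ ∘ ω_I) = −(ω_J − i·ω_K). -/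
open Module

theorem hyperkahler_twistor_identities
    {V : Type*} [AddCommGroup V] [Module ℂ V] [FiniteDimensional ℂ V]
    (g : V →ₗ[ℂ] Module.Dual ℂ V) (ginv : Module.Dual ℂ V →ₗ[ℂ] V)
    (hg1 : g ∘ₗ ginv = LinearMap.id) (hg2 : ginv ∘ₗ g = LinearMap.id)
    (I J K : V →ₗ[ℂ] V)
    (hI : I ∘ₗ I = -LinearMap.id) (hJ : J ∘ₗ J = -LinearMap.id)
    (hK : K ∘ₗ K = -LinearMap.id)
    (hIJ : I ∘ₗ J = K) (hJK : J ∘ₗ K = I) (hKI : K ∘ₗ I = J)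
    (ωJinv ωKinv : Module.Dual ℂ V →ₗ[ℂ] V)
    (hJ1 : (g ∘ₗ J) ∘ₗ ωJinv = LinearMap.id) (hJ2 : ωJinv ∘ₗ (g ∘ₗ J) = LinearMap.id)
    (hK1 : (g ∘ₗ K) ∘ₗ ωKinv = LinearMap.id) (hK2 : ωKinv ∘ₗ (g ∘ₗ K) = LinearMap.id)
    (σ : Module.Dual ℂ V →ₗ[ℂ] V)
    (hσ : σ = (1/4 : ℂ) • (ωJinv - Complex.I • ωKinv)) :
    (σ ∘ₗ (g ∘ₗ J - Complex.I • (g ∘ₗ K)) = 0 ∧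
     (g ∘ₗ J - Complex.I • (g ∘ₗ K)) ∘ₗ σ = 0) ∧
    σ ∘ₗ ((g ∘ₗ I) ∘ₗ σ) = 0 ∧
    (4 : ℂ) • ((g ∘ₗ I) ∘ₗ (σ ∘ₗ (g ∘ₗ I))) = -(g ∘ₗ J - Complex.I • (g ∘ₗ K)) := by
  -- pointwise forms of the hypotheses
  have hI' : ∀ x, I (I x) = -x := fun x => by
    have := congrArg (fun f => f x) hI; simpa using this
  have hJ' : ∀ x, J (J x) = -x := fun x => by
    have := congrArg (fun f => f x) hJ; simpa using this
  have hK' : ∀ x, K (K x) = -x := fun x => by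
    have := congrArg (fun f => f x) hK; simpa using this
  have hIJ' : ∀ x, I (J x) = K x := fun x => by
    have := congrArg (fun f => f x) hIJ; simpa using this
  have hJK' : ∀ x, J (K x) = I x := fun x => by
    have := congrArg (fun f => f x) hJK; simpa using this
  have hKI' : ∀ x, K (I x) = J x := fun x => by
    have := congrArg (fun f => f x) hKI; simpa using this
  have hKJ' : ∀ x, K (J x) = -I x := fun x => by
    have : K (J x) = K (K (I x)) := by rw [hKI']
    rw [this, hK']
  have hJI' : ∀ x, J (I x) = -K x := fun x => by
    have : J (I x) = J (J (K x)) := by rw [hJK']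
    rw [this, hJ']
  have hIK' : ∀ x, I (K x) = -J x := fun x => by
    have : I (K x) = I (I (J x)) := by rw [hIJ']
    rw [this, hI']
  have hg1' : ∀ φ, g (ginv φ) = φ := fun φ => by
    have := congrArg (fun f => f φ) hg1; simpa using this
  have hg2' : ∀ x, ginv (g x) = x := fun x => by
    have := congrArg (fun f => f x) hg2; simpa using this
  have hJ2' : ∀ x, ωJinv (g (J x)) = x := fun x => by
    have := congrArg (fun f => f x) hJ2; simpa using this
  have hK2' : ∀ x, ωKinv (g (K x)) = x := fun x => by
    have := congrArg (fun f => f x) hK2; simpa using this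
  -- explicit formulas for the inverses
  have hwJ : ∀ φ, ωJinv φ = -J (ginv φ) := fun φ => by
    have h1 : g (J (-J (ginv φ))) = φ := by
      simp [hJ', hg1']
    calc ωJinv φ = ωJinv (g (J (-J (ginv φ)))) := by rw [h1]
    _ = -J (ginv φ) := hJ2' _
  have hwK : ∀ φ, ωKinv φ = -K (ginv φ) := fun φ => by
    have h1 : g (K (-K (ginv φ))) = φ := by
      simp [hK', hg1']
    calc ωKinv φ = ωKinv (g (K (-K (ginv φ)))) := by rw [h1]
    _ = -K (ginv φ) := hK2' _
  subst hσ
  refine ⟨⟨?_, ?_⟩, ?_, ?_⟩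
  · ext x
    simp only [LinearMap.comp_apply, LinearMap.sub_apply, LinearMap.smul_apply,
      LinearMap.zero_apply, map_sub, map_smul, hwJ, hwK, map_neg, hg2',
      hJ', hK', hKJ', hJK', smul_neg, neg_neg, smul_smul, Complex.I_mul_I]
    match_scalars
    all_goals first
      | ring1
      | (simp only [Complex.I_mul_I, Complex.I_sq]; ring1)
      | (ring_nf; simp [Complex.I_sq, Complex.I_mul_I])
      | (ring_nf; simp only [Complex.I_sq, Complex.I_mul_I]; ring1)
  · ext φ x
    simp only [LinearMap.comp_apply, LinearMap.sub_apply, LinearMap.smul_apply,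
      LinearMap.zero_apply, LinearMap.neg_apply, LinearMap.add_apply,
      map_sub, map_smul, map_neg, map_add, hwJ, hwK,
      hJ', hK', hKJ', hJK', smul_neg, neg_neg, smul_smul, smul_eq_mul,
      Complex.I_mul_I]
    first
      | ring1
      | (simp only [Complex.I_mul_I, Complex.I_sq]; ring1)
      | (ring_nf; simp [Complex.I_sq, Complex.I_mul_I])
      | (ring_nf; simp only [Complex.I_sq, Complex.I_mul_I]; ring1)
  · ext φ
    simp only [LinearMap.comp_apply, LinearMap.sub_apply, LinearMap.smul_apply,
      LinearMap.zero_apply, map_sub, map_smul, map_neg, hwJ, hwK, hg2',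
      hJ', hK', hKJ', hJK', hJI', hIK', hKI', hIJ', smul_neg, neg_neg, smul_smul,
      Complex.I_mul_I]
    match_scalars
    all_goals first
      | ring1
      | (simp only [Complex.I_mul_I, Complex.I_sq]; ring1)
      | (ring_nf; simp [Complex.I_sq, Complex.I_mul_I])
      | (ring_nf; simp only [Complex.I_sq, Complex.I_mul_I]; ring1)
  · ext φ x
    simp only [LinearMap.comp_apply, LinearMap.sub_apply, LinearMap.smul_apply,
      LinearMap.neg_apply, LinearMap.add_apply, map_sub, map_smul, map_neg,
      map_add, hwJ, hwK, hg2', hJ', hK', hKJ', hJK', hJI', hIK', hKI', hIJ',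
      smul_neg, neg_neg, smul_smul, smul_eq_mul, Complex.I_mul_I]
    first
      | ring1
      | (simp only [Complex.I_mul_I, Complex.I_sq]; ring1)
      | (ring_nf; simp [Complex.I_sq, Complex.I_mul_I])
      | (ring_nf; simp only [Complex.I_sq, Complex.I_mul_I]; ring1)
end

section
/- Let E be a finite-dimensional vector space over a field K of characteristic ≠ 2 with a nondegenerate symmetric bilinear form ⟨·,·⟩, and suppose E = a ⊕ b ⊕ a' ⊕ b' is a direct sum of subspaces such that a ⊕ b and a ⊕ b' are both Lagrangian. Then dim a' = dim a and the pairing a × a' → K, (u, v) ↦ ⟨u, v⟩, is nondegenerate (perfect): for every nonzero u ∈ a there is v ∈ a' with ⟨u, v⟩ ≠ 0, and for every nonzero v ∈ a' there is u ∈ a with ⟨u, v⟩ ≠ 0. -/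
open Module

theorem perfect_pairing_of_lagrangian_pieces
    {K E : Type*} [Field K] [AddCommGroup E] [Module K E] [FiniteDimensional K E]
    (hchar : (2 : K) ≠ 0)
    (Φ : E →ₗ[K] E →ₗ[K] K)
    (hsym : ∀ u v, Φ u v = Φ v u)
    (hnd : ∀ u, (∀ v, Φ u v = 0) → u = 0)
    (a b a' b' : Submodule K E)
    (hdec : DirectSum.IsInternal ![a, b, a', b'])
    (hab_iso : ∀ u ∈ a ⊔ b, ∀ v ∈ a ⊔ b, Φ u v = 0)
    (hab_dim : 2 * Module.finrank K ↥(a ⊔ b) = Module.finrank K E)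
    (hab'_iso : ∀ u ∈ a ⊔ b', ∀ v ∈ a ⊔ b', Φ u v = 0)
    (hab'_dim : 2 * Module.finrank K ↥(a ⊔ b') = Module.finrank K E) :
    Module.finrank K ↥a' = Module.finrank K ↥a ∧
    (∀ u ∈ a, u ≠ 0 → ∃ v ∈ a', Φ u v ≠ 0) ∧
    (∀ v ∈ a', v ≠ 0 → ∃ u ∈ a, Φ u v ≠ 0) := by
  have ind := hdec.submodule_iSupIndep
  have htop : a ⊔ b ⊔ (a' ⊔ b') = ⊤ := by
    rw [← hdec.submodule_iSup_eq_top]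
    apply le_antisymm
    · refine sup_le (sup_le ?_ ?_) (sup_le ?_ ?_)
      · exact le_iSup ![a, b, a', b'] 0
      · exact le_iSup ![a, b, a', b'] 1
      · exact le_iSup ![a, b, a', b'] 2
      · exact le_iSup ![a, b, a', b'] 3
    · apply iSup_le
      intro i
      fin_cases i
      · exact le_sup_of_le_left le_sup_left
      · exact le_sup_of_le_left le_sup_right
      · exact le_sup_of_le_right le_sup_left
      · exact le_sup_of_le_right le_sup_right
  -- disjointness facts
  have hd_ab : Disjoint a b := ind.pairwiseDisjoint (by decide : (0 : Fin 4) ≠ 1)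
  have hd_ab' : Disjoint a b' := ind.pairwiseDisjoint (by decide : (0 : Fin 4) ≠ 3)
  have hd_a'b' : Disjoint a' b' := ind.pairwiseDisjoint (by decide : (2 : Fin 4) ≠ 3)
  -- dimensions
  have dsup : ∀ p q : Submodule K E, Disjoint p q →
      finrank K ↥(p ⊔ q) = finrank K ↥p + finrank K ↥q := by
    intro p q h
    have := Submodule.finrank_sup_add_finrank_inf_eq p q
    rw [h.eq_bot] at this
    simpa using this
  have h1 : finrank K ↥(a ⊔ b) = finrank K ↥a + finrank K ↥b := dsup _ _ hd_ab
  have h2 : finrank K ↥(a ⊔ b') = finrank K ↥a + finrank K ↥b' := dsup _ _ hd_ab'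
  have h3 : finrank K E = finrank K ↥a + finrank K ↥b + finrank K ↥a' + finrank K ↥b' := by
    have heq := (LinearEquiv.ofBijective (DirectSum.coeLinearMap ![a, b, a', b']) hdec).symm.finrank_eq
    rw [heq, Module.finrank_directSum, Fin.sum_univ_four]
    simp [Matrix.vecHead, Matrix.vecTail]
    rfl
  have hdim : finrank K ↥a' = finrank K ↥a := by omega
  -- left nondegeneracy
  have left : ∀ u ∈ a, u ≠ 0 → ∃ v ∈ a', Φ u v ≠ 0 := by
    intro u hu hu0
    by_contra h
    push_neg at h
    refine hu0 (hnd u fun v => ?_)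
    have hv : v ∈ a ⊔ b ⊔ (a' ⊔ b') := htop ▸ Submodule.mem_top
    obtain ⟨w, hw, z, hz, rfl⟩ := Submodule.mem_sup.mp hv
    obtain ⟨p, hp, q, hq, rfl⟩ := Submodule.mem_sup.mp hz
    have e1 : Φ u w = 0 := hab_iso u (Submodule.mem_sup_left hu) w hw
    have e2 : Φ u p = 0 := h p hp
    have e3 : Φ u q = 0 :=
      hab'_iso u (Submodule.mem_sup_left hu) q (Submodule.mem_sup_right hq)
    simp [e1, e2, e3]
  refine ⟨hdim, left, ?_⟩
  -- right nondegeneracy via the map a → Dual a'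
  set B : ↥a →ₗ[K] Module.Dual K ↥a' := (Φ.domRestrict a).compl₂ a'.subtype with hB
  have hBinj : Function.Injective B := by
    rw [← LinearMap.ker_eq_bot, Submodule.eq_bot_iff]
    rintro ⟨u, hu⟩ hker
    rw [Submodule.mk_eq_zero]
    by_contra hu0
    obtain ⟨v, hv, hne⟩ := left u hu hu0
    apply hne
    have := congrFun (congrArg DFunLike.coe hker) ⟨v, hv⟩
    simpa [hB] using this
  have hBsurj : Function.Surjective B := by
    have hfr : finrank K ↥a = finrank K (Module.Dual K ↥a') := by
      rw [Subspace.dual_finrank_eq, hdim]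
    exact (LinearMap.injective_iff_surjective_of_finrank_eq_finrank hfr).mp hBinj
  intro v hv hv0
  have hv0' : (⟨v, hv⟩ : ↥a') ≠ 0 := by simpa [Submodule.mk_eq_zero] using hv0
  have : ¬ ∀ φ : Module.Dual K ↥a', φ ⟨v, hv⟩ = 0 := by
    rw [Module.forall_dual_apply_eq_zero_iff]
    exact hv0'
  push_neg at this
  obtain ⟨φ, hφ⟩ := this
  obtain ⟨u, hu⟩ := hBsurj φ
  refine ⟨u.1, u.2, ?_⟩
  have : B u ⟨v, hv⟩ = Φ u.1 v := by simp [hB]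
  rw [hu] at this
  rw [← this]
  exact hφ
end
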